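/- arXiv:2512.12254 — 8 statements merged into one kernel-verified Lean document; each statement's English description precedes it below -/
import Mathlib

section
/- Let X_1,...,X_n be i.i.d. standard exponential random variables (density e^{-x} on (0,∞)). Then for every integer k ≥ 0 and all real a_1,...,a_n, one has k!·h_k(a_1,...,a_n) = E[(∑_{j=1}^n a_j X_j)^k]. -/
/-! Expanding `(∑ⱼ aⱼ Xⱼ)^k` by the multinomial theorem, the monomial `∏ⱼ (aⱼ Xⱼ)^cⱼ` with
`∑ⱼ cⱼ = k` carries the coefficient `k! / ∏ⱼ cⱼ!`. By independence its expectation is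
`∏ⱼ aⱼ^cⱼ E[Xⱼ^cⱼ] = ∏ⱼ aⱼ^cⱼ cⱼ!`, and the factorials cancel: each monomial of `h_k` appears
with weight exactly `k!`. -/

open Finset MeasureTheory ProbabilityTheory

/-- The complete homogeneous symmetric polynomial of degree `k` in `n` real variables. -/
noncomputable def chs (n k : ℕ) (a : Fin n → ℝ) : ℝ :=
  ∑ s ∈ (Finset.univ : Finset (Fin n)).sym k, (Multiset.map a s.1).prod

open Real
open scoped Nat

namespace Multiset

variable {α : Type*} [Fintype α] [DecidableEq α]

theorem prod_map_eq_prod_pow_count {M : Type*} [CommMonoid M] (m : Multiset α) (f : α → M) :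
    (m.map f).prod = ∏ a, f a ^ m.count a := by
  rw [Finset.prod_multiset_map_count]
  exact Finset.prod_subset (subset_univ _) fun a _ ha => by
    rw [count_eq_zero_of_notMem (by simpa using ha), pow_zero]

theorem prod_factorial_count_mul_countPerms (m : Multiset α) :
    (∏ a, (m.count a)!) * m.countPerms = (card m)! := by
  rw [countPerms, Finsupp.multinomial_eq_of_support_subset (subset_univ _)]
  simpa [sum_count_eq_card] using Nat.multinomial_spec univ m.toFinsupp

end Multiset

lemma measurable_gammaPDF (a r : ℝ) : Measurable (gammaPDF a r) :=
  (measurable_gammaPDFReal a r).ennreal_ofReal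

lemma gammaPDFReal_mul_pow_of_pos {a r x : ℝ} (hx : 0 < x) (m : ℕ) :
    gammaPDFReal a r x * x ^ m = r ^ a / Gamma a * (x ^ (a + m - 1) * exp (-(r * x))) := by
  rw [gammaPDFReal, if_pos hx.le, ← rpow_natCast, show a + m - 1 = a - 1 + m by ring,
    rpow_add hx]
  ring

lemma gammaPDFReal_mul_pow_of_neg {a r x : ℝ} (hx : x < 0) (m : ℕ) :
    gammaPDFReal a r x * x ^ m = 0 := by
  rw [gammaPDFReal, if_neg hx.not_ge, zero_mul]

lemma integrable_pow_gammaMeasure {a r : ℝ} (ha : 0 < a) (hr : 0 < r) (m : ℕ) :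
    Integrable (fun x => x ^ m) (gammaMeasure a r) := by
  rw [gammaMeasure, integrable_withDensity_iff (measurable_gammaPDF a r)
    (ae_of_all _ fun _ => ENNReal.ofReal_lt_top)]
  simp_rw [gammaPDF, ENNReal.toReal_ofReal (gammaPDFReal_nonneg ha hr _), mul_comm (_ ^ m)]
  rw [← integrableOn_iff_integrable_of_support_subset (s := Set.Ici 0)
    fun x hx => not_lt.mp fun hneg => hx (gammaPDFReal_mul_pow_of_neg hneg m),
    integrableOn_Ici_iff_integrableOn_Ioi]
  have hgamma : IntegrableOn
      (fun x : ℝ => r ^ a / Gamma a * (x ^ (a + m - 1) * exp (-r * x ^ (1 : ℝ)))) (Set.Ioi 0) :=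
    (integrableOn_rpow_mul_exp_neg_mul_rpow (by linarith [m.cast_nonneg (α := ℝ)]) one_pos
      hr).const_mul _
  refine hgamma.congr_fun (fun x hx => ?_) measurableSet_Ioi
  simp only [gammaPDFReal_mul_pow_of_pos hx, rpow_one, neg_mul]

lemma integral_pow_gammaMeasure {a r : ℝ} (ha : 0 < a) (hr : 0 < r) (m : ℕ) :
    ∫ x, x ^ m ∂gammaMeasure a r = Gamma (a + m) / (Gamma a * r ^ m) := by
  rw [gammaMeasure, integral_withDensity_eq_integral_toReal_smul
    (measurable_gammaPDF a r) (ae_of_all _ fun _ => ENNReal.ofReal_lt_top)]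
  simp_rw [gammaPDF, ENNReal.toReal_ofReal (gammaPDFReal_nonneg ha hr _), smul_eq_mul]
  rw [← setIntegral_eq_integral_of_forall_compl_eq_zero (s := Set.Ici 0)
    fun x hx => gammaPDFReal_mul_pow_of_neg (not_le.mp hx) m, integral_Ici_eq_integral_Ioi,
    setIntegral_congr_fun measurableSet_Ioi fun x hx => gammaPDFReal_mul_pow_of_pos hx m,
    integral_const_mul, integral_rpow_mul_exp_neg_mul_Ioi (by positivity) hr, one_div,
    inv_rpow hr.le, rpow_add hr, rpow_natCast]
  have := Gamma_pos_of_pos ha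
  field_simp

lemma integrable_pow_expMeasure {r : ℝ} (hr : 0 < r) (m : ℕ) :
    Integrable (fun x => x ^ m) (expMeasure r) :=
  integrable_pow_gammaMeasure one_pos hr m

lemma integral_pow_expMeasure {r : ℝ} (hr : 0 < r) (m : ℕ) :
    ∫ x, x ^ m ∂expMeasure r = m ! / r ^ m := by
  rw [expMeasure, integral_pow_gammaMeasure one_pos hr, add_comm, Gamma_nat_eq_factorial,
    Gamma_one, one_mul]

theorem integral_pi_sum_mul_pow {ι : Type*} [Fintype ι] [DecidableEq ι] (ν : Measure ℝ)
    [SigmaFinite ν] (hν : ∀ m : ℕ, Integrable (fun x => x ^ m) ν) (a : ι → ℝ) (k : ℕ) :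
    ∫ x, (∑ j, a j * x j) ^ k ∂Measure.pi (fun _ => ν) =
      ∑ s ∈ univ.sym k, s.1.countPerms * ((s.1.map a).prod * ∏ j, ∫ t, t ^ s.1.count j ∂ν) := by
  have hmonomial (s : Multiset ι) (x : ι → ℝ) :
      (s.map fun j => a j * x j).prod = (s.map a).prod * ∏ j, x j ^ s.count j := by
    rw [Multiset.prod_map_mul, Multiset.prod_map_eq_prod_pow_count _ x]
  simp_rw [Finset.sum_pow, hmonomial]
  rw [integral_finsetSum _ fun s _ =>
    ((Integrable.fintype_prod fun j => hν (s.1.count j)).const_mul _).const_mul _]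
  refine sum_congr rfl fun s _ => ?_
  rw [integral_const_mul, integral_const_mul]
  congr 2
  exact integral_fintype_prod_eq_prod fun j (t : ℝ) => t ^ s.1.count j

theorem stmt1_general {Ω : Type*} [MeasurableSpace Ω] (μ : Measure Ω)
    (n : ℕ) (X : Fin n → Ω → ℝ)
    (hindep : iIndepFun X μ)
    (hdist : ∀ i, Measure.map (X i) μ = expMeasure 1)
    (k : ℕ) (a : Fin n → ℝ) :
    (k.factorial : ℝ) * chs n k a = ∫ ω, (∑ j, a j * X j ω) ^ k ∂μ := by
  have : IsProbabilityMeasure (expMeasure 1) := isProbabilityMeasure_expMeasure one_pos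
  -- a map that is not a.e.-measurable has zero push-forward
  have hX (i : Fin n) : AEMeasurable (X i) μ :=
    .of_map_ne_zero (by rw [hdist]; exact IsProbabilityMeasure.ne_zero _)
  have hlaw : μ.map (fun ω i => X i ω) = Measure.pi fun _ => expMeasure 1 := by
    simp_rw [hindep.map_fun_eq_pi_map hX, hdist]
  have hmap := integral_map (aemeasurable_pi_lambda _ hX)
    (f := fun x : Fin n → ℝ => (∑ j, a j * x j) ^ k)
    (by fun_prop : Measurable fun x : Fin n → ℝ => (∑ j, a j * x j) ^ k).aestronglyMeasurable
  rw [← hmap, hlaw, integral_pi_sum_mul_pow _ (integrable_pow_expMeasure one_pos), chs, mul_sum]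
  refine sum_congr rfl fun s _ => ?_
  simp_rw [integral_pow_expMeasure one_pos, one_pow, div_one]
  have hfac := Multiset.prod_factorial_count_mul_countPerms s.1
  rw [s.2] at hfac
  rw [← hfac]
  push_cast
  ring

theorem stmt1 {Ω : Type*} [MeasurableSpace Ω] (μ : Measure Ω) [IsProbabilityMeasure μ]
    (n : ℕ) (X : Fin n → Ω → ℝ)
    (hmeas : ∀ i, Measurable (X i))
    (hindep : iIndepFun X μ)
    (hdist : ∀ i, Measure.map (X i) μ = expMeasure 1)
    (k : ℕ) (a : Fin n → ℝ) :
    (k.factorial : ℝ) * chs n k a = ∫ ω, (∑ j, a j * X j ω) ^ k ∂μ :=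
  stmt1_general μ n X hindep hdist k a
end

section
/- For every integer k ≥ 1 and all real a_1,...,a_n, Hunter's inequality holds: h_{2k}(a_1,...,a_n) ≥ (1/(k!·2^k))·(∑_{i=1}^n a_i²)^k. In particular h_{2k}(a) ≥ 0 with equality only at a = 0. -/
/-!
Let `D_k(s) = h_{2k}(s) - (|s|² / 2)^k / k!`, and argue by strong induction on `k`.
Replacing a pair `m + d, m - d` of variables by `m, m` leaves `D_k` no larger: from the identity
`1 / ((1 - (m + d)X)(1 - (m - d)X)) = ∑ⱼ d²ʲ X²ʲ / (1 - mX)²ʲ⁺²`, `h_{2k}` changes by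
`∑_{j ≥ 1} d²ʲ h_{2k-2j}(m, …, m, rest)` (with `2j + 2` copies of `m`), while `(|s|² / 2)^k / k!`
changes by `∑_{j ≥ 1} d²ʲ / j! · (|s'|² / 2)^{k-j} / (k-j)!`, which the induction hypothesis bounds
termwise. Padding `s` with zeros to `2^N` entries and averaging pairwise along a binary tree ends at
a constant vector `(c, …, c)` of length `M`, where `D_k ≥ 0` follows from
`M^k / k! ≤ C(M + k - 1, k) ≤ C(M + 2k - 1, 2k)`.
-/

open Finset

open PowerSeries
open scoped Nat

namespace Hunter

section CommSemiring

variable {R : Type*} [CommSemiring R]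

noncomputable def geom (c : R) : R⟦X⟧ := mk (c ^ ·)

/-- `∏_{c ∈ s} 1 / (1 - cX) = ∑ₘ hₘ(s) Xᵐ`, the generating function of the complete homogeneous
symmetric polynomials evaluated at `s`. -/
noncomputable def hSeries (s : Multiset R) : R⟦X⟧ := (s.map geom).prod

theorem geom_zero : geom (0 : R) = 1 := by
  ext n
  simp [geom, coeff_one, zero_pow_eq]

theorem geom_eq_rescale (c : R) : geom c = rescale c (mk 1) := by
  simp [geom, rescale_mk]

@[simp]
theorem hSeries_cons (c : R) (s : Multiset R) : hSeries (c ::ₘ s) = geom c * hSeries s := by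
  simp [hSeries]

@[simp]
theorem hSeries_add (s t : Multiset R) : hSeries (s + t) = hSeries s * hSeries t := by
  simp [hSeries]

@[simp]
theorem hSeries_replicate (n : ℕ) (c : R) : hSeries (Multiset.replicate n c) = geom c ^ n := by
  simp [hSeries]

theorem sum_sym_prod_map_eq_coeff_prod_geom {α : Type*} [Fintype α] [DecidableEq α]
    (f : α → R) (m : ℕ) :
    ∑ s ∈ (univ : Finset α).sym m, ((s : Multiset α).map f).prod =
      coeff m (∏ i, geom (f i)) := by
  simp only [coeff_prod, geom, coeff_mk]
  refine sum_bij' (fun s _ => Multiset.toFinsupp (s : Multiset α))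
    (fun l hl => ⟨Finsupp.toMultiset l, ?_⟩) ?_ ?_ ?_ ?_ ?_
  · simp_all [mem_finsuppAntidiag, Finsupp.sum_fintype]
  · intro s _
    refine mem_finsuppAntidiag.2 ⟨?_, subset_univ _⟩
    change ∑ i, Multiset.toFinsupp (s : Multiset α) i = m
    simp
  · intro l _
    exact mem_sym_iff.2 fun _ _ => mem_univ _
  · intro s _
    ext1
    simp
  · intro l _
    simp
  · intro s _
    rw [prod_multiset_map_count, prod_subset (subset_univ _)]
    · simp
    · intro i _ hi
      simp_all

end CommSemiring

section CommRing

variable {R : Type*} [CommRing R]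

theorem geom_mul_one_sub (c : R) : geom c * (1 - C c * X) = 1 := by
  rw [geom_eq_rescale, ← rescale_X, ← map_one (rescale c), ← map_sub, ← map_mul,
    mk_one_mul_one_sub_eq_one, map_one]

theorem coeff_geom_pow_succ (c : R) (N n : ℕ) :
    coeff n (geom c ^ (N + 1)) = (N + n).choose N * c ^ n := by
  rw [geom_eq_rescale, ← map_pow, mk_one_pow_eq_mk_choose_add, coeff_rescale, coeff_mk, mul_comm]

/-- `1 / ((1 - (m + d)X)(1 - (m - d)X)) = ∑ⱼ d²ʲ X²ʲ / (1 - mX)²ʲ⁺²`, truncated after `J` terms;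
it comes from `(1 - (m + d)X)(1 - (m - d)X) = (1 - mX)² - d²X²`. -/
theorem geom_add_mul_geom_sub_eq (m d : R) (J : ℕ) :
    geom (m + d) * geom (m - d) =
      ∑ j ∈ range J, C (d ^ (2 * j)) * X ^ (2 * j) * geom m ^ (2 * j + 2) +
        C (d ^ (2 * J)) * X ^ (2 * J) * geom m ^ (2 * J) * (geom (m + d) * geom (m - d)) := by
  set P := geom (m + d) * geom (m - d)
  have hP : P = geom m ^ 2 + C d ^ 2 * X ^ 2 * geom m ^ 2 * P := by
    have hA := geom_mul_one_sub m
    have hU := geom_mul_one_sub (m + d)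
    have hV := geom_mul_one_sub (m - d)
    simp only [map_add, map_sub] at hU hV
    linear_combination geom m ^ 2 * geom (m - d) * (1 - (C m - C d) * X) * hU + geom m ^ 2 * hV
      - P * (geom m * (1 - C m * X) + 1) * hA
  induction J with
  | zero => simp
  | succ J ih =>
    rw [sum_range_succ]
    simp only [map_pow] at ih ⊢
    linear_combination ih + C d ^ (2 * J) * X ^ (2 * J) * geom m ^ (2 * J) * hP

theorem coeff_geom_add_mul_geom_sub_mul (m d : R) (F : R⟦X⟧) (k : ℕ) :
    coeff (2 * k) (geom (m + d) * geom (m - d) * F) =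
      ∑ p ∈ antidiagonal k, d ^ (2 * p.1) * coeff (2 * p.2) (geom m ^ (2 * p.1 + 2) * F) := by
  rw [geom_add_mul_geom_sub_eq m d (k + 1), add_mul, sum_mul, map_add, map_sum,
    Nat.sum_antidiagonal_eq_sum_range_succ
      (fun i j => d ^ (2 * i) * coeff (2 * j) (geom m ^ (2 * i + 2) * F))]
  have hrem : coeff (2 * k) (C (d ^ (2 * (k + 1))) * X ^ (2 * (k + 1)) * geom m ^ (2 * (k + 1)) *
      (geom (m + d) * geom (m - d)) * F) = 0 := by
    simp only [mul_assoc, coeff_C_mul, coeff_X_pow_mul', if_neg (by omega : ¬2 * (k + 1) ≤ 2 * k),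
      mul_zero]
  rw [hrem, add_zero]
  refine sum_congr rfl fun j hj => ?_
  have hjk : j ≤ k := Nat.lt_succ_iff.mp (mem_range.mp hj)
  rw [mul_assoc, mul_assoc, coeff_C_mul, coeff_X_pow_mul', if_pos (by omega), Nat.mul_sub]

end CommRing

theorem chs_eq_coeff_hSeries (n m : ℕ) (a : Fin n → ℝ) :
    chs n m a = coeff m (hSeries (univ.val.map a)) := by
  refine (sum_sym_prod_map_eq_coeff_prod_geom a m).trans ?_
  rw [hSeries, Multiset.map_map]
  rfl

theorem add_pow_div_factorial {K : Type*} [Field K] [CharZero K] (x y : K) (n : ℕ) :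
    (x + y) ^ n / n ! = ∑ p ∈ antidiagonal n, x ^ p.1 / p.1 ! * (y ^ p.2 / p.2 !) := by
  rw [(Commute.all x y).add_pow', sum_div]
  refine sum_congr rfl fun p hp => ?_
  obtain rfl := HasAntidiagonal.mem_antidiagonal.mp hp
  rw [nsmul_eq_mul, Nat.choose_symm_add, ← Nat.add_choose_mul_factorial_mul_factorial p.1 p.2]
  have hchoose : ((p.1 + p.2).choose p.2 : K) ≠ 0 := by
    exact_mod_cast (Nat.choose_pos (Nat.le_add_left _ _)).ne'
  push_cast
  field_simp

noncomputable def sqSum (s : Multiset ℝ) : ℝ := (s.map (· ^ 2)).sum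

@[simp]
theorem sqSum_cons (c : ℝ) (s : Multiset ℝ) : sqSum (c ::ₘ s) = c ^ 2 + sqSum s := by
  simp [sqSum]

@[simp]
theorem sqSum_add (s t : Multiset ℝ) : sqSum (s + t) = sqSum s + sqSum t := by
  simp [sqSum]

@[simp]
theorem sqSum_replicate (n : ℕ) (c : ℝ) : sqSum (Multiset.replicate n c) = n * c ^ 2 := by
  simp [sqSum]

theorem sqSum_nonneg (s : Multiset ℝ) : 0 ≤ sqSum s :=
  Multiset.sum_nonneg fun _ hx => by
    obtain ⟨y, -, rfl⟩ := Multiset.mem_map.mp hx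
    positivity

noncomputable def hunterGap (k : ℕ) (s : Multiset ℝ) : ℝ :=
  coeff (2 * k) (hSeries s) - (sqSum s / 2) ^ k / k !

theorem sqSum_cons_cons_le (m : ℝ) (t : Multiset ℝ) (i : ℕ) :
    sqSum (m ::ₘ m ::ₘ t) ≤ sqSum (Multiset.replicate (2 * i + 2) m + t) := by
  simp only [sqSum_cons, sqSum_add, sqSum_replicate]
  push_cast
  nlinarith [mul_nonneg (Nat.cast_nonneg i : (0 : ℝ) ≤ i) (sq_nonneg m)]

theorem binomial_term_le_coeff_hSeries {j : ℕ}
    (ih : ∀ s, (sqSum s / 2) ^ j / j ! ≤ coeff (2 * j) (hSeries s)) (m d : ℝ) (t : Multiset ℝ)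
    (i : ℕ) :
    (d ^ 2) ^ i / i ! * ((sqSum (m ::ₘ m ::ₘ t) / 2) ^ j / j !) ≤
      d ^ (2 * i) * coeff (2 * j) (hSeries (Multiset.replicate (2 * i + 2) m + t)) := by
  have hsq := sqSum_nonneg (m ::ₘ m ::ₘ t)
  calc (d ^ 2) ^ i / i ! * ((sqSum (m ::ₘ m ::ₘ t) / 2) ^ j / j !)
      ≤ (d ^ 2) ^ i * ((sqSum (m ::ₘ m ::ₘ t) / 2) ^ j / j !) := by
        gcongr
        exact div_le_self (by positivity) (by exact_mod_cast i.factorial_pos)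
    _ ≤ (d ^ 2) ^ i * ((sqSum (Multiset.replicate (2 * i + 2) m + t) / 2) ^ j / j !) := by
        gcongr
        exact sqSum_cons_cons_le m t i
    _ ≤ d ^ (2 * i) * coeff (2 * j) (hSeries (Multiset.replicate (2 * i + 2) m + t)) := by
        rw [pow_mul]
        gcongr
        exact ih _

theorem hunterGap_pair_mean_le {k : ℕ}
    (ih : ∀ j < k, ∀ s, (sqSum s / 2) ^ j / j ! ≤ coeff (2 * j) (hSeries s))
    (m d : ℝ) (t : Multiset ℝ) :
    hunterGap k (m ::ₘ m ::ₘ t) ≤ hunterGap k ((m + d) ::ₘ (m - d) ::ₘ t) := by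
  set w := sqSum (m ::ₘ m ::ₘ t) / 2
  let H : ℕ × ℕ → ℝ := fun p =>
    d ^ (2 * p.1) * coeff (2 * p.2) (hSeries (Multiset.replicate (2 * p.1 + 2) m + t))
  let B : ℕ × ℕ → ℝ := fun p => (d ^ 2) ^ p.1 / p.1 ! * (w ^ p.2 / p.2 !)
  have hH : coeff (2 * k) (hSeries ((m + d) ::ₘ (m - d) ::ₘ t)) = ∑ p ∈ antidiagonal k, H p := by
    simp only [H, hSeries_cons, hSeries_add, hSeries_replicate, ← mul_assoc]
    exact coeff_geom_add_mul_geom_sub_mul m d _ k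
  have hB : (sqSum ((m + d) ::ₘ (m - d) ::ₘ t) / 2) ^ k / k ! = ∑ p ∈ antidiagonal k, B p := by
    rw [← add_pow_div_factorial]
    congr 2
    simp only [w, sqSum_cons]
    ring
  have hmem : (0, k) ∈ antidiagonal k := by simp
  -- Only the terms at `(0, k)` live in degree `2 * k`; they make up the gap at `m, m`.
  have h0 : H (0, k) - B (0, k) = hunterGap k (m ::ₘ m ::ₘ t) := by
    simp [H, B, hunterGap, w, ← mul_assoc]
  have hle : ∀ p ∈ (antidiagonal k).erase (0, k), B p ≤ H p := by
    rintro ⟨i, j⟩ hp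
    obtain ⟨hne, hij⟩ := mem_erase.mp hp
    rw [HasAntidiagonal.mem_antidiagonal] at hij
    have hj : j < k := by
      simp only [ne_eq, Prod.mk.injEq, not_and] at hne
      omega
    exact binomial_term_le_coeff_hSeries (ih j hj) m d t i
  calc hunterGap k (m ::ₘ m ::ₘ t) ≤ (H (0, k) - B (0, k)) +
        ∑ p ∈ (antidiagonal k).erase (0, k), (H p - B p) :=
        h0 ▸ le_add_of_nonneg_right (sum_nonneg fun p hp => sub_nonneg.mpr (hle p hp))
    _ = ∑ p ∈ antidiagonal k, (H p - B p) := add_sum_erase _ (fun p => H p - B p) hmem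
    _ = hunterGap k ((m + d) ::ₘ (m - d) ::ₘ t) := by
        rw [sum_sub_distrib, ← hH, ← hB, hunterGap]

theorem hunterGap_replicate_nonneg (k N : ℕ) (c : ℝ) :
    0 ≤ hunterGap k (Multiset.replicate (N + 1) c) := by
  have hc : 0 ≤ c ^ (2 * k) := (even_two_mul k).pow_nonneg c
  have hchoose : ((N + 1 : ℕ) : ℝ) ^ k / k ! ≤ (N + 2 * k).choose N := by
    calc ((N + 1 : ℕ) : ℝ) ^ k / k ! ≤ (N + k).choose k := by
          have := Nat.pow_le_choose (α := ℝ) k (N + k)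
          rwa [show N + k + 1 - k = N + 1 by omega] at this
      _ ≤ (N + 2 * k).choose N := by
          rw [← Nat.choose_symm_add]
          exact_mod_cast Nat.choose_le_choose N (by omega)
  rw [hunterGap, sub_nonneg, hSeries_replicate, coeff_geom_pow_succ, sqSum_replicate]
  calc (((N + 1 : ℕ) : ℝ) * c ^ 2 / 2) ^ k / k !
      = ((N + 1 : ℕ) : ℝ) ^ k / k ! * c ^ (2 * k) / 2 ^ k := by
        rw [div_pow, mul_pow, ← pow_mul]
        ring
    _ ≤ ((N + 1 : ℕ) : ℝ) ^ k / k ! * c ^ (2 * k) :=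
        div_le_self (by positivity) (one_le_pow₀ one_le_two)
    _ ≤ (N + 2 * k).choose N * c ^ (2 * k) := by
        gcongr

theorem exists_eq_add_card_eq {α : Type*} (s : Multiset α) {n : ℕ} (hn : n ≤ Multiset.card s) :
    ∃ s₁ s₂, s = s₁ + s₂ ∧ Multiset.card s₁ = n ∧ Multiset.card s₂ = Multiset.card s - n := by
  induction s using Quotient.inductionOn with
  | h l => exact ⟨l.take n, l.drop n, by simp, by simpa using hn, by simp⟩

section Averaging

variable {Φ : Multiset ℝ → ℝ}

theorem apply_replicate_mean_le (hΦ : ∀ m d t, Φ (m ::ₘ m ::ₘ t) ≤ Φ ((m + d) ::ₘ (m - d) ::ₘ t))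
    (j : ℕ) (u v : ℝ) (t : Multiset ℝ) :
    Φ (Multiset.replicate (2 * j) ((u + v) / 2) + t) ≤
      Φ (Multiset.replicate j u + Multiset.replicate j v + t) := by
  induction j generalizing t with
  | zero => simp
  | succ j ih =>
    set r := Multiset.replicate j u + Multiset.replicate j v
    have hpair := hΦ ((u + v) / 2) ((u - v) / 2) (r + t)
    rw [show (u + v) / 2 + (u - v) / 2 = u by ring, show (u + v) / 2 - (u - v) / 2 = v by ring]
      at hpair
    calc Φ (Multiset.replicate (2 * (j + 1)) ((u + v) / 2) + t)
        = Φ (Multiset.replicate (2 * j) ((u + v) / 2) + ((u + v) / 2 ::ₘ (u + v) / 2 ::ₘ t)) := by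
          simp [Nat.mul_succ, Multiset.replicate_succ]
      _ ≤ Φ (r + ((u + v) / 2 ::ₘ (u + v) / 2 ::ₘ t)) := ih _
      _ ≤ Φ (u ::ₘ v ::ₘ (r + t)) := by simpa using hpair
      _ = Φ (Multiset.replicate (j + 1) u + Multiset.replicate (j + 1) v + t) := by
          simp [r, Multiset.replicate_succ, Multiset.cons_swap u v]

theorem apply_replicate_mean_le_of_card_eq_two_pow
    (hΦ : ∀ m d t, Φ (m ::ₘ m ::ₘ t) ≤ Φ ((m + d) ::ₘ (m - d) ::ₘ t))
    (N : ℕ) (s t : Multiset ℝ) (hs : Multiset.card s = 2 ^ N) :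
    Φ (Multiset.replicate (2 ^ N) (s.sum / 2 ^ N) + t) ≤ Φ (s + t) := by
  induction N generalizing s t with
  | zero =>
    obtain ⟨a, rfl⟩ := Multiset.card_eq_one.mp hs
    simp [Multiset.replicate_one, Multiset.singleton_add]
  | succ N ih =>
    obtain ⟨s₁, s₂, rfl, h₁, h₂⟩ :=
      exists_eq_add_card_eq s (n := 2 ^ N) (by rw [hs, pow_succ]; omega)
    rw [hs, pow_succ, Nat.mul_two, Nat.add_sub_cancel] at h₂
    set c₁ := s₁.sum / 2 ^ N
    set c₂ := s₂.sum / 2 ^ N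
    have hmean : (s₁ + s₂).sum / 2 ^ (N + 1) = (c₁ + c₂) / 2 := by
      rw [Multiset.sum_add, pow_succ]
      ring
    calc Φ (Multiset.replicate (2 ^ (N + 1)) ((s₁ + s₂).sum / 2 ^ (N + 1)) + t)
        = Φ (Multiset.replicate (2 * 2 ^ N) ((c₁ + c₂) / 2) + t) := by rw [hmean, pow_succ']
      _ ≤ Φ (Multiset.replicate (2 ^ N) c₁ + (Multiset.replicate (2 ^ N) c₂ + t)) := by
          rw [← add_assoc]
          exact apply_replicate_mean_le hΦ _ c₁ c₂ t
      _ ≤ Φ (s₁ + (Multiset.replicate (2 ^ N) c₂ + t)) := ih s₁ _ h₁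
      _ = Φ (Multiset.replicate (2 ^ N) c₂ + (s₁ + t)) := by rw [add_left_comm]
      _ ≤ Φ (s₂ + (s₁ + t)) := ih s₂ _ h₂
      _ = Φ (s₁ + s₂ + t) := by rw [add_left_comm, add_assoc]

end Averaging

theorem sqSum_div_two_pow_div_factorial_le_coeff_hSeries (k : ℕ) (s : Multiset ℝ) :
    (sqSum s / 2) ^ k / k ! ≤ coeff (2 * k) (hSeries s) := by
  induction k using Nat.strong_induction_on generalizing s with
  | _ k ih =>
  suffices 0 ≤ hunterGap k s by rwa [hunterGap, sub_nonneg] at this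
  set n := Multiset.card s
  set s' := s + Multiset.replicate (2 ^ n - n) 0
  have hcard : Multiset.card s' = 2 ^ n := by
    simp only [s', Multiset.card_add, Multiset.card_replicate]
    have := n.lt_two_pow_self
    omega
  have hpad : hunterGap k s' = hunterGap k s := by
    simp [s', hunterGap, geom_zero]
  calc 0 ≤ hunterGap k (Multiset.replicate (2 ^ n - 1 + 1) (s'.sum / 2 ^ n)) :=
        hunterGap_replicate_nonneg k _ _
    _ ≤ hunterGap k s' := by
        simpa [Nat.sub_add_cancel n.one_le_two_pow] using apply_replicate_mean_le_of_card_eq_two_pow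
          (hunterGap_pair_mean_le ih) n s' 0 hcard
    _ = hunterGap k s := hpad

end Hunter

theorem stmt2_general (n k : ℕ) (a : Fin n → ℝ) :
    (1 / ((k.factorial : ℝ) * 2 ^ k)) * (∑ i, (a i)^2) ^ k ≤ chs n (2 * k) a ∧
    0 ≤ chs n (2 * k) a ∧
    (chs n (2 * k) a = 0 → a = 0) := by
  have hsq : Hunter.sqSum (univ.val.map a) = ∑ i, a i ^ 2 := by
    rw [Hunter.sqSum, Multiset.map_map]
    rfl
  have hle : 1 / ((k ! : ℝ) * 2 ^ k) * (∑ i, a i ^ 2) ^ k ≤ chs n (2 * k) a := by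
    rw [Hunter.chs_eq_coeff_hSeries]
    convert Hunter.sqSum_div_two_pow_div_factorial_le_coeff_hSeries k _ using 1
    rw [hsq, div_pow]
    field_simp
  have hnonneg : 0 ≤ 1 / ((k ! : ℝ) * 2 ^ k) * (∑ i, a i ^ 2) ^ k := by positivity
  refine ⟨hle, hnonneg.trans hle, fun hzero => ?_⟩
  have hpow : (∑ i, a i ^ 2) ^ k = 0 :=
    (mul_eq_zero.mp (le_antisymm (hzero ▸ hle) hnonneg)).resolve_left (by positivity)
  have hsum :=
    (sum_eq_zero_iff_of_nonneg fun i _ => sq_nonneg (a i)).mp (eq_zero_of_pow_eq_zero hpow)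
  funext i
  exact eq_zero_of_pow_eq_zero (hsum i (mem_univ i))

theorem stmt2 (n k : ℕ) (hk : 1 ≤ k) (a : Fin n → ℝ) :
    (1 / ((k.factorial : ℝ) * 2 ^ k)) * (∑ i, (a i)^2) ^ k ≤ chs n (2 * k) a ∧
    0 ≤ chs n (2 * k) a ∧
    (chs n (2 * k) a = 0 → a = 0) :=
  stmt2_general n k a
end

section
/- For every integer k ≥ 1 and every index i, the partial derivative of the complete homogeneous symmetric polynomial satisfies ∂h_k(x_1,...,x_n)/∂x_i = h_{k-1}(x_1,...,x_n, x_i), i.e. the degree-(k−1) CHS polynomial in the n+1 variables obtained by repeating x_i. -/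
/-!
Splitting off one variable gives `h_{k+1}(x) = x_j h_k(x) + h_{k+1}(x without x_j)`. For
`H_k(t) = h_k(x with x_i := t)` this reads `H_{k+1}(t) = t H_k(t) + c`, and for
`G_k(t) = h_k(x with x_i := t, t)`, splitting off the appended variable, `G_{k+1} = t G_k + H_{k+1}`.
Hence the product rule turns `H_{k+1}' = G_k` into `H_{k+2}' = H_{k+1} + t G_k = G_{k+1}`, and
induction on `k` gives the claim; the case `k = 0` is `H_1(t) = t + c`.
-/

open Finset

open MvPolynomial Function

section

variable {σ τ R : Type*} [Fintype σ] [DecidableEq σ] [Fintype τ] [DecidableEq τ] [CommSemiring R]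

theorem eval_hsymm (a : σ → R) (k : ℕ) :
    eval a (hsymm σ R k) = ∑ s : Sym σ k, (s.1.map a).prod := by
  simp [hsymm, map_multiset_prod, Multiset.map_map]

theorem eval_hsymm_comp_equiv (e : σ ≃ τ) (b : τ → R) (k : ℕ) :
    eval (b ∘ e) (hsymm σ R k) = eval b (hsymm τ R k) := by
  rw [← eval_rename, rename_hsymm]

theorem eval_hsymm_option_succ (b : Option σ → R) (k : ℕ) :
    eval b (hsymm (Option σ) R (k + 1))
      = b none * eval b (hsymm (Option σ) R k) + eval (b ∘ some) (hsymm σ R (k + 1)) := by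
  simp only [eval_hsymm, ← symOptionSuccEquiv.symm.sum_comp,
    Fintype.sum_sum_type, Finset.mul_sum]
  congr 1
  · refine Finset.sum_congr rfl fun s _ => ?_
    simp [symOptionSuccEquiv, Sym.coe_cons]
  · refine Finset.sum_congr rfl fun s _ => ?_
    simp [symOptionSuccEquiv, Multiset.map_map]

theorem eval_hsymm_succ (a : σ → R) (j : σ) (k : ℕ) :
    eval a (hsymm σ R (k + 1))
      = a j * eval a (hsymm σ R k) + eval (fun b : {b // b ≠ j} => a b) (hsymm _ R (k + 1)) := by
  simp only [← eval_hsymm_comp_equiv (Equiv.optionSubtypeNe j) a]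
  exact eval_hsymm_option_succ _ k

theorem eval_hsymm_update_succ (a : σ → R) (j : σ) (t : R) (k : ℕ) :
    eval (update a j t) (hsymm σ R (k + 1))
      = t * eval (update a j t) (hsymm σ R k)
        + eval (fun b : {b // b ≠ j} => a b) (hsymm _ R (k + 1)) := by
  rw [eval_hsymm_succ _ j, update_self]
  congr 3
  exact funext fun b => update_of_ne b.2 _ _

theorem eval_hsymm_snoc (n k : ℕ) (a : Fin n → R) (y : R) :
    eval (Fin.snoc a y) (hsymm (Fin (n + 1)) R k)
      = eval (fun o : Option (Fin n) => o.elim y a) (hsymm (Option (Fin n)) R k) := by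
  rw [← eval_hsymm_comp_equiv finSuccEquivLast]
  congr 2
  funext i
  induction i using Fin.lastCases <;> simp

end

theorem hasDerivAt_eval_hsymm_update {𝕜 σ : Type*} [NontriviallyNormedField 𝕜] [Fintype σ]
    [DecidableEq σ] (a : σ → 𝕜) (j : σ) (k : ℕ) (t : 𝕜) :
    HasDerivAt (fun s => eval (update a j s) (hsymm σ 𝕜 (k + 1)))
      (eval (fun o : Option σ => o.elim t (update a j t)) (hsymm (Option σ) 𝕜 k)) t := by
  induction k with
  | zero =>
    simp only [eval_hsymm_update_succ a j _ 0, hsymm_zero, map_one, mul_one]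
    exact (hasDerivAt_id t).add_const _
  | succ k ih =>
    simp only [eval_hsymm_update_succ a j _ (k + 1), eval_hsymm_option_succ]
    refine (((hasDerivAt_id' t).mul ih).add_const _).congr_deriv ?_
    simp [Function.comp_def]
    ring

theorem chs_eq_eval_hsymm (n k : ℕ) (a : Fin n → ℝ) : chs n k a = eval a (hsymm (Fin n) ℝ k) := by
  rw [chs, sym_univ, eval_hsymm]

theorem stmt4 (n k : ℕ) (hk : 1 ≤ k) (x : Fin n → ℝ) (i : Fin n) :
    deriv (fun t : ℝ => chs n k (Function.update x i t)) (x i)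
      = chs (n + 1) (k - 1) (Fin.snoc x (x i)) := by
  obtain ⟨m, rfl⟩ : ∃ m, k = m + 1 := ⟨k - 1, by omega⟩
  simp_rw [chs_eq_eval_hsymm, (hasDerivAt_eval_hsymm_update x i m (x i)).deriv, update_eq_self,
    eval_hsymm_snoc, Nat.add_sub_cancel]
end

section
/- For every even positive integer n, h_4 evaluated at the half-plus/half-minus vector equals 1/8 + 1/(4n); that is, h_4(1/√n,...,1/√n,−1/√n,...,−1/√n) = 1/8 + 1/(4n), where each sign appears n/2 times. -/
/-!
Newton's identities express `24 h₄` through the power sums `p₁, …, p₄`. For the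
half-plus/half-minus vector the odd power sums vanish, `p₂ = 1` and `p₄ = 1/n`, so
`24 h₄ = 3 p₂² + 6 p₄ = 3 + 6/n`.
-/

open Finset

/-- The half-plus/half-minus vector: `n/2` coordinates `1/√n` and `n/2` coordinates `-1/√n`. -/
noncomputable def halfVec (n : ℕ) : Fin n → ℝ :=
  fun i => if (i : ℕ) < n / 2 then 1 / Real.sqrt n else -(1 / Real.sqrt n)

section hsymmOn

variable {ι R : Type*} [DecidableEq ι]

def hsymmOn [CommSemiring R] (s : Finset ι) (a : ι → R) (k : ℕ) : R :=
  ∑ m ∈ s.sym k, (m.1.map a).prod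

@[simp]
lemma hsymmOn_zero [CommSemiring R] (s : Finset ι) (a : ι → R) : hsymmOn s a 0 = 1 := by
  simp only [hsymmOn, sym_zero, sum_singleton]
  rfl

@[simp]
lemma hsymmOn_empty_succ [CommSemiring R] (a : ι → R) (k : ℕ) : hsymmOn ∅ a (k + 1) = 0 := by
  simp [hsymmOn]

lemma hsymmOn_insert [CommSemiring R] {b : ι} {s : Finset ι} (hb : b ∉ s) (a : ι → R) (k : ℕ) :
    hsymmOn (insert b s) a k = ∑ i ∈ range (k + 1), a b ^ i * hsymmOn s a (k - i) := by
  rw [hsymmOn, ← sum_coe_sort, ← (symInsertEquiv hb).symm.sum_comp, ← univ_sigma_univ, sum_sigma,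
    ← Fin.sum_univ_eq_sum_range (fun i => a b ^ i * hsymmOn s a (k - i))]
  refine sum_congr rfl fun i _ => ?_
  rw [hsymmOn, ← sum_coe_sort (s.sym (k - i)), mul_sum]
  refine sum_congr rfl fun m _ => ?_
  simp only [symInsertEquiv_symm_apply_coe, Sym.val_eq_coe, Sym.coe_fill, Sym.coe_replicate,
    Multiset.map_add, Multiset.prod_add, Multiset.map_replicate, Multiset.prod_replicate, mul_comm]

variable [CommRing R] (s : Finset ι) (a : ι → R)

lemma hsymmOn_one : hsymmOn s a 1 = ∑ i ∈ s, a i := by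
  induction s using Finset.induction_on with
  | empty => simp
  | insert b s hb ih => simp [hsymmOn_insert hb, sum_range_succ, sum_insert hb, ih, add_comm]

lemma two_mul_hsymmOn_two :
    2 * hsymmOn s a 2 = (∑ i ∈ s, a i) ^ 2 + ∑ i ∈ s, a i ^ 2 := by
  induction s using Finset.induction_on with
  | empty => simp
  | insert b s hb ih =>
    simp only [hsymmOn_insert hb, sum_insert hb, sum_range_succ, sum_range_zero, Nat.reduceSub,
      hsymmOn_zero]
    linear_combination ih + 2 * a b * hsymmOn_one s a

lemma six_mul_hsymmOn_three :
    6 * hsymmOn s a 3 = (∑ i ∈ s, a i) ^ 3 + 3 * (∑ i ∈ s, a i) * (∑ i ∈ s, a i ^ 2)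
      + 2 * ∑ i ∈ s, a i ^ 3 := by
  induction s using Finset.induction_on with
  | empty => simp
  | insert b s hb ih =>
    simp only [hsymmOn_insert hb, sum_insert hb, sum_range_succ, sum_range_zero, Nat.reduceSub,
      hsymmOn_zero]
    linear_combination ih + 3 * a b * two_mul_hsymmOn_two s a + 6 * a b ^ 2 * hsymmOn_one s a

lemma twentyFour_mul_hsymmOn_four :
    24 * hsymmOn s a 4 = (∑ i ∈ s, a i) ^ 4 + 6 * (∑ i ∈ s, a i) ^ 2 * (∑ i ∈ s, a i ^ 2)
      + 3 * (∑ i ∈ s, a i ^ 2) ^ 2 + 8 * (∑ i ∈ s, a i) * (∑ i ∈ s, a i ^ 3)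
      + 6 * ∑ i ∈ s, a i ^ 4 := by
  induction s using Finset.induction_on with
  | empty => simp
  | insert b s hb ih =>
    simp only [hsymmOn_insert hb, sum_insert hb, sum_range_succ, sum_range_zero, Nat.reduceSub,
      hsymmOn_zero]
    linear_combination ih + 4 * a b * six_mul_hsymmOn_three s a
      + 12 * a b ^ 2 * two_mul_hsymmOn_two s a + 24 * a b ^ 3 * hsymmOn_one s a

end hsymmOn

lemma chs_eq_hsymmOn (n k : ℕ) (a : Fin n → ℝ) : chs n k a = hsymmOn univ a k := rfl

lemma sum_halfVec_pow {n : ℕ} (hn : Even n) (k : ℕ) :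
    ∑ i, halfVec n i ^ k = (n / 2 : ℝ) * ((1 / √n) ^ k + (-(1 / √n)) ^ k) := by
  obtain ⟨m, rfl⟩ := hn
  have hm : (m + m) / 2 = m := by omega
  rw [Fin.sum_univ_add]
  simp [halfVec, hm, mul_add]

theorem stmt9 (n : ℕ) (hn : 0 < n) (hne : Even n) :
    chs n 4 (halfVec n) = 1 / 8 + 1 / (4 * (n : ℝ)) := by
  have hn' : (n : ℝ) ≠ 0 := by positivity
  have hsq : (1 / √n) ^ 2 = 1 / (n : ℝ) := by
    rw [div_pow, one_pow, Real.sq_sqrt n.cast_nonneg]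
  have hsum : ∑ i, halfVec n i = 0 := by simpa using sum_halfVec_pow hne 1
  have h24 : 24 * chs n 4 (halfVec n) = 3 + 6 / n :=
    calc 24 * chs n 4 (halfVec n)
        = 3 * (n * (1 / √n) ^ 2) ^ 2 + 6 * n * ((1 / √n) ^ 2) ^ 2 := by
          rw [chs_eq_hsymmOn, twentyFour_mul_hsymmOn_four, hsum]
          simp only [sum_halfVec_pow hne]
          ring
      _ = 3 + 6 / n := by
          rw [hsq]
          field_simp
  linear_combination h24 / 24
end

section
/- Let n be even and γ_1 + γ_2 = n with γ_1, γ_2 ≥ 1. Then for all real a, b: a² + b² + ((γ_1+1)a + (γ_2+1)b)² ≥ (2/n)·(γ_1 a² + γ_2 b²), with equality when γ_1 = γ_2 = n/2 and a = −b. -/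
/-!
Write `m = γ₁ + γ₂` and `s = (γ₁ + 1) a + (γ₂ + 1) b`. Then `m²` times the difference of the two
sides is the sum of squares `(m s - (a + b))² + (m² + 2m - 1) (a + b)²`, nonnegative once `m ≥ 1`.
For `γ₁ = γ₂` and `b = -a` the term `s` vanishes and both sides equal `2 a²`.
-/

lemma mul_sub_two_mul_eq_sq_add_sq (x y a b : ℝ) :
    (x + y) * ((x + y) * (a ^ 2 + b ^ 2 + ((x + 1) * a + (y + 1) * b) ^ 2)
        - 2 * (x * a ^ 2 + y * b ^ 2))
      = ((x + y) * ((x + 1) * a + (y + 1) * b) - (a + b)) ^ 2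
        + ((x + y) ^ 2 + 2 * (x + y) - 1) * (a + b) ^ 2 := by
  ring

lemma two_div_add_mul_le (x y a b : ℝ) (hxy : 1 ≤ x + y) :
    2 / (x + y) * (x * a ^ 2 + y * b ^ 2)
      ≤ a ^ 2 + b ^ 2 + ((x + 1) * a + (y + 1) * b) ^ 2 := by
  have hm : 0 < x + y := by linarith
  have hsos : 0 ≤ (x + y) * ((x + y) * (a ^ 2 + b ^ 2 + ((x + 1) * a + (y + 1) * b) ^ 2)
      - 2 * (x * a ^ 2 + y * b ^ 2)) := by
    rw [mul_sub_two_mul_eq_sq_add_sq]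
    have : 0 ≤ (x + y) ^ 2 + 2 * (x + y) - 1 := by nlinarith
    positivity
  rw [div_mul_eq_mul_div, div_le_iff₀ hm]
  linarith [(mul_nonneg_iff_of_pos_left hm).mp hsos]

lemma sq_add_sq_neg_eq_two_div (x a : ℝ) (hx : x ≠ 0) :
    a ^ 2 + (-a) ^ 2 + ((x + 1) * a + (x + 1) * -a) ^ 2
      = 2 / (x + x) * (x * a ^ 2 + x * (-a) ^ 2) := by
  field_simp
  ring

theorem stmt10_general (n : ℕ) (γ₁ γ₂ : ℕ) (h1 : 1 ≤ γ₁)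
    (hsum : γ₁ + γ₂ = n) (a b : ℝ) :
    (2 / (n : ℝ)) * ((γ₁ : ℝ) * a ^ 2 + (γ₂ : ℝ) * b ^ 2)
      ≤ a ^ 2 + b ^ 2 + (((γ₁ : ℝ) + 1) * a + ((γ₂ : ℝ) + 1) * b) ^ 2 ∧
    (γ₁ = n / 2 ∧ γ₂ = n / 2 ∧ b = -a →
      a ^ 2 + b ^ 2 + (((γ₁ : ℝ) + 1) * a + ((γ₂ : ℝ) + 1) * b) ^ 2
        = (2 / (n : ℝ)) * ((γ₁ : ℝ) * a ^ 2 + (γ₂ : ℝ) * b ^ 2)) := by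
  subst hsum
  refine ⟨?_, ?_⟩
  · push_cast
    exact two_div_add_mul_le _ _ a b (by exact_mod_cast Nat.le_add_right_of_le h1)
  · rintro ⟨hγ₁, hγ₂, rfl⟩
    obtain rfl : γ₂ = γ₁ := by omega
    push_cast
    exact sq_add_sq_neg_eq_two_div _ a (by positivity)

theorem stmt10 (n : ℕ) (hn : Even n) (γ₁ γ₂ : ℕ) (h1 : 1 ≤ γ₁) (h2 : 1 ≤ γ₂)
    (hsum : γ₁ + γ₂ = n) (a b : ℝ) :
    (2 / (n : ℝ)) * ((γ₁ : ℝ) * a ^ 2 + (γ₂ : ℝ) * b ^ 2)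
      ≤ a ^ 2 + b ^ 2 + (((γ₁ : ℝ) + 1) * a + ((γ₂ : ℝ) + 1) * b) ^ 2 ∧
    (γ₁ = n / 2 ∧ γ₂ = n / 2 ∧ b = -a →
      a ^ 2 + b ^ 2 + (((γ₁ : ℝ) + 1) * a + ((γ₂ : ℝ) + 1) * b) ^ 2
        = (2 / (n : ℝ)) * ((γ₁ : ℝ) * a ^ 2 + (γ₂ : ℝ) * b ^ 2)) :=
  stmt10_general n γ₁ γ₂ h1 hsum a b
end

section
/- Let x, y, z and a, b, c be nonnegative reals with x+y+z = a+b+c, x²+y²+z² = a²+b²+c², and xyz ≤ abc. Then for every integer k ≥ 1, x^k + y^k + z^k ≤ a^k + b^k + c^k. -/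
/-!
The power sums `pₙ = aⁿ + bⁿ + cⁿ` satisfy Newton's recurrence for the cubic
`(t - a)(t - b)(t - c)`. Since `x, y, z` share `e₁` and `e₂` with `a, b, c`, the difference
`dₙ = pₙ(a, b, c) - pₙ(x, y, z)` satisfies
`(E - a)(E - b)(E - c) d = (abc - xyz) · pₙ(x, y, z) ≥ 0`, where `E` is the shift
(`shiftSub c u = (E - c) u`). As `d₀ = d₁ = d₂ = 0`, peeling off the factors `E - a`, `E - b`,
`E - c` one at a time (each with a nonnegative root) shows `d ≥ 0`.
-/

section ShiftSub

variable {R : Type*} [CommRing R]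

def shiftSub (c : R) (u : ℕ → R) (n : ℕ) : R := u (n + 1) - c * u n

theorem nonneg_of_shiftSub_nonneg [PartialOrder R] [IsOrderedRing R] {c : R} {u : ℕ → R}
    (hc : 0 ≤ c) (h0 : 0 ≤ u 0) (h : ∀ n, 0 ≤ shiftSub c u n) (n : ℕ) : 0 ≤ u n := by
  induction n with
  | zero => exact h0
  | succ n ih =>
    have := h n
    rw [shiftSub, sub_nonneg] at this
    exact (mul_nonneg hc ih).trans this

theorem shiftSub_shiftSub_shiftSub (a b c : R) (u : ℕ → R) (n : ℕ) :
    shiftSub a (shiftSub b (shiftSub c u)) n =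
      u (n + 3) - (a + b + c) * u (n + 2) + (a * b + b * c + c * a) * u (n + 1)
        - a * b * c * u n := by
  simp only [shiftSub]
  ring

theorem nonneg_of_cubic_recurrence [PartialOrder R] [IsOrderedRing R] {a b c : R} {u : ℕ → R}
    (ha : 0 ≤ a) (hb : 0 ≤ b) (hc : 0 ≤ c) (h0 : u 0 = 0) (h1 : u 1 = 0) (h2 : u 2 = 0)
    (h : ∀ n, 0 ≤ u (n + 3) - (a + b + c) * u (n + 2) + (a * b + b * c + c * a) * u (n + 1)
        - a * b * c * u n) (n : ℕ) : 0 ≤ u n := by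
  have h_bc : ∀ n, 0 ≤ shiftSub b (shiftSub c u) n := by
    refine nonneg_of_shiftSub_nonneg ha ?_ fun n => ?_
    · simp [shiftSub, h0, h1, h2]
    · exact (shiftSub_shiftSub_shiftSub a b c u n).symm ▸ h n
  have h_c : ∀ n, 0 ≤ shiftSub c u n :=
    nonneg_of_shiftSub_nonneg hb (by simp [shiftSub, h0, h1]) h_bc
  exact nonneg_of_shiftSub_nonneg hc h0.ge h_c n

end ShiftSub

theorem powerSum_sub_cubic_recurrence {x y z a b c : ℝ} (h1 : x + y + z = a + b + c)
    (he2 : x * y + y * z + z * x = a * b + b * c + c * a) (n : ℕ) :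
    let d : ℕ → ℝ := fun n => (a ^ n + b ^ n + c ^ n) - (x ^ n + y ^ n + z ^ n)
    d (n + 3) - (a + b + c) * d (n + 2) + (a * b + b * c + c * a) * d (n + 1) - a * b * c * d n =
      (a * b * c - x * y * z) * (x ^ n + y ^ n + z ^ n) := by
  intro d
  linear_combination (-(x ^ (n + 2) + y ^ (n + 2) + z ^ (n + 2))) * h1
    + (x ^ (n + 1) + y ^ (n + 1) + z ^ (n + 1)) * he2

theorem stmt11_general (x y z a b c : ℝ) (hx : 0 ≤ x) (hy : 0 ≤ y) (hz : 0 ≤ z)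
    (ha : 0 ≤ a) (hb : 0 ≤ b) (hc : 0 ≤ c)
    (h1 : x + y + z = a + b + c) (h2 : x ^ 2 + y ^ 2 + z ^ 2 = a ^ 2 + b ^ 2 + c ^ 2)
    (h3 : x * y * z ≤ a * b * c) (k : ℕ) :
    x ^ k + y ^ k + z ^ k ≤ a ^ k + b ^ k + c ^ k := by
  have he2 : x * y + y * z + z * x = a * b + b * c + c * a := by
    linear_combination ((x + y + z + a + b + c) / 2) * h1 - (1 / 2) * h2
  have hd := nonneg_of_cubic_recurrence ha hb hc
    (u := fun n => (a ^ n + b ^ n + c ^ n) - (x ^ n + y ^ n + z ^ n))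
    (by simp) (by simp [h1]) (by simp [h2]) (fun n => by
      rw [powerSum_sub_cubic_recurrence h1 he2 n]
      exact mul_nonneg (sub_nonneg.2 h3) (by positivity)) k
  exact sub_nonneg.1 hd

theorem stmt11 (x y z a b c : ℝ) (hx : 0 ≤ x) (hy : 0 ≤ y) (hz : 0 ≤ z)
    (ha : 0 ≤ a) (hb : 0 ≤ b) (hc : 0 ≤ c)
    (h1 : x + y + z = a + b + c) (h2 : x ^ 2 + y ^ 2 + z ^ 2 = a ^ 2 + b ^ 2 + c ^ 2)
    (h3 : x * y * z ≤ a * b * c) (k : ℕ) (hk : 1 ≤ k) :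
    x ^ k + y ^ k + z ^ k ≤ a ^ k + b ^ k + c ^ k :=
  stmt11_general x y z a b c hx hy hz ha hb hc h1 h2 h3 k
end

section
/- Let a_1, a_2, a_3 be reals with a_1 + a_2 + a_3 = 0 and a_1² + a_2² + a_3² = 1. Then the real part of the characteristic function of a_1X_1 + a_2X_2 + a_3X_3, where X_i are i.i.d. standard exponentials, equals (1 + t²/2)/((1 + a_1²t²)(1 + a_2²t²)(1 + a_3²t²)), and it satisfies the pointwise bounds (1 + t²/2)² ≤ (1 + a_1²t²)(1 + a_2²t²)(1 + a_3²t²) ≤ (1 + t²/6)²(1 + 2t²/3) for all real t. -/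
/-!
The characteristic function is `1 / z(t)` with `z(t) = ∏ⱼ (1 - i aⱼ t)`. Since `∑ aⱼ = 0` and
`∑ aⱼ aₖ = -1/2`, Vieta gives `z(t) = 1 + t²/2 + i a₁a₂a₃ t³`, so `Re (1 / z) = Re z / |z|²` with
`|z|² = ∏ⱼ (1 + aⱼ² t²) = (1 + t²/2)² + (a₁a₂a₃)² t⁶`. This gives the lower bound at once, and
the upper bound is `54 (a₁a₂a₃)² ≤ 1`, i.e. the nonnegativity of the discriminant of the cubic
with roots `aⱼ`, because `(1 + t²/6)² (1 + 2t²/3) = (1 + t²/2)² + t⁶/54`.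
-/

open MeasureTheory ProbabilityTheory Complex Set

lemma integral_expMeasure {E : Type*} [NormedAddCommGroup E] [NormedSpace ℝ E] {r : ℝ}
    (hr : 0 ≤ r) (g : ℝ → E) :
    ∫ x, g x ∂expMeasure r = ∫ x in Ioi 0, (r * Real.exp (-(r * x))) • g x := by
  unfold expMeasure gammaMeasure gammaPDF
  rw [integral_withDensity_eq_integral_toReal_smul
    (measurable_gammaPDFReal 1 r).ennreal_ofReal (ae_of_all _ fun _ ↦ ENNReal.ofReal_lt_top),
    ← integral_Ici_eq_integral_Ioi, ← integral_indicator measurableSet_Ici]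
  congr 1 with x
  by_cases hx : 0 ≤ x
  · simp [gammaPDFReal, hx, hr, Real.exp_nonneg, indicator_of_mem]
  · simp [gammaPDFReal, hx]

lemma charFun_expMeasure {r : ℝ} (hr : 0 < r) (t : ℝ) :
    charFun (expMeasure r) t = r / (r - t * I) := by
  have hre : (t * I - r : ℂ).re < 0 := by simpa using hr
  rw [charFun_apply_real, integral_expMeasure hr.le]
  calc ∫ x : ℝ in Ioi 0, (r * Real.exp (-(r * x))) • cexp (t * x * I)
      = ∫ x : ℝ in Ioi 0, r * cexp ((t * I - r) * x) := by
        congr 1 with x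
        rw [real_smul, ofReal_mul, mul_assoc, ofReal_exp, ← Complex.exp_add]
        push_cast
        ring_nf
    _ = r / (r - t * I) := by
        rw [integral_const_mul, integral_exp_mul_complex_Ioi hre, ofReal_zero, mul_zero, exp_zero,
          ← neg_sub, div_neg, neg_div, neg_neg, mul_one_div]

lemma ProbabilityTheory.iIndepFun.charFun_map_fun_sum_mul {Ω ι : Type*} [MeasurableSpace Ω]
    {μ : Measure Ω} [Fintype ι] {X : ι → Ω → ℝ} (hX : iIndepFun X μ)
    (mX : ∀ i, Measurable (X i)) (a : ι → ℝ) (t : ℝ) :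
    charFun (μ.map fun ω ↦ ∑ i, a i * X i ω) t = ∏ i, charFun (μ.map (X i)) (a i * t) := by
  have mS : Measurable fun ω ↦ ∑ i, a i * X i ω :=
    Finset.measurable_sum _ fun i _ ↦ (mX i).const_mul _
  have hchar : ∀ (Y : Ω → ℝ), Measurable Y → ∀ s : ℝ,
      charFun (μ.map Y) s = ∫ ω, cexp (s * Y ω * I) ∂μ := fun Y hY s ↦ by
    rw [charFun_apply_real, integral_map hY.aemeasurable (by fun_prop)]
  simp_rw [hchar _ mS, hchar _ (mX _)]
  rw [← hX.integral_fun_prod_comp (f := fun i (x : ℝ) ↦ cexp (↑(a i * t) * x * I))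
    (fun i ↦ (mX i).aemeasurable) (fun i ↦ by fun_prop)]
  congr with ω
  rw [← Complex.exp_sum, ofReal_sum, Finset.mul_sum, Finset.sum_mul]
  exact congrArg cexp (Finset.sum_congr rfl fun i _ ↦ by push_cast; ring)

lemma re_charFun_map {Ω : Type*} [MeasurableSpace Ω] {μ : Measure Ω} [IsFiniteMeasure μ]
    {Y : Ω → ℝ} (hY : Measurable Y) (t : ℝ) :
    (charFun (μ.map Y) t).re = ∫ ω, Real.cos (t * Y ω) ∂μ := by
  have hint : Integrable (fun ω ↦ cexp (t * Y ω * I)) μ :=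
    (integrable_const (1 : ℝ)).mono' (by fun_prop) (ae_of_all _ fun ω ↦ by
      rw [← ofReal_mul, norm_exp_ofReal_mul_I])
  rw [charFun_apply_real, integral_map hY.aemeasurable (by fun_prop), ← RCLike.re_to_complex,
    ← integral_re hint]
  congr with ω
  rw [← ofReal_mul, RCLike.re_to_complex, exp_ofReal_mul_I_re]

lemma normSq_prod_one_sub_mul_I {ι : Type*} (s : Finset ι) (b : ι → ℝ) :
    normSq (∏ i ∈ s, (1 - b i * I)) = ∏ i ∈ s, (1 + b i ^ 2) := by
  rw [map_prod]
  congr with i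
  simp [normSq_apply]
  ring

lemma prod_one_sub_mul_I_of_sum_eq_zero {a : Fin 3 → ℝ} (hsum : ∑ i, a i = 0)
    (hnorm : ∑ i, a i ^ 2 = 1) (t : ℝ) :
    ∏ i, (1 - ((a i * t : ℝ) : ℂ) * I)
      = ((1 + t ^ 2 / 2 : ℝ) : ℂ) + ((a 0 * a 1 * a 2 * t ^ 3 : ℝ) : ℂ) * I := by
  rw [Fin.sum_univ_three] at hsum hnorm
  have he2 : a 0 * a 1 + a 0 * a 2 + a 1 * a 2 = -1 / 2 := by
    linear_combination (a 0 + a 1 + a 2) / 2 * hsum - hnorm / 2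
  apply Complex.ext <;>
    simp only [Fin.prod_univ_three, mul_re, mul_im, sub_re, sub_im, add_re, add_im, one_re, one_im,
      ofReal_re, ofReal_im, I_re, I_im]
  · linear_combination -t ^ 2 * he2
  · linear_combination -t * hsum

lemma sq_mul_mul_le_of_add_add_eq_zero {x y z : ℝ} (h : x + y + z = 0) :
    54 * (x * y * z) ^ 2 ≤ (x ^ 2 + y ^ 2 + z ^ 2) ^ 3 := by
  obtain rfl : z = -x - y := by linarith
  -- the discriminant `((x - y) (y - z) (x - z))²` equals `(x² + y² + z²)³ / 2 - 27 (xyz)²`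
  nlinarith [sq_nonneg ((x - y) * (x + 2 * y) * (2 * x + y))]

theorem stmt15 {Ω : Type*} [MeasurableSpace Ω] (μ : Measure Ω) [IsProbabilityMeasure μ]
    (X : Fin 3 → Ω → ℝ) (hmeas : ∀ i, Measurable (X i))
    (hindep : iIndepFun X μ)
    (hdist : ∀ i, Measure.map (X i) μ = expMeasure 1)
    (a : Fin 3 → ℝ) (hsum : ∑ i, a i = 0) (hnorm : ∑ i, (a i) ^ 2 = 1) :
    (∀ t : ℝ,
      (∫ ω, Real.cos (t * ∑ i, a i * X i ω) ∂μ)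
        = (1 + t ^ 2 / 2) / ∏ i, (1 + (a i) ^ 2 * t ^ 2)) ∧
    (∀ t : ℝ,
      (1 + t ^ 2 / 2) ^ 2 ≤ ∏ i, (1 + (a i) ^ 2 * t ^ 2) ∧
      ∏ i, (1 + (a i) ^ 2 * t ^ 2) ≤ (1 + t ^ 2 / 6) ^ 2 * (1 + 2 * t ^ 2 / 3)) := by
  have hprod : ∀ t : ℝ, ∏ i, (1 + a i ^ 2 * t ^ 2)
      = (1 + t ^ 2 / 2) ^ 2 + (a 0 * a 1 * a 2 * t ^ 3) ^ 2 := fun t ↦ by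
    simp_rw [← mul_pow, ← normSq_prod_one_sub_mul_I, prod_one_sub_mul_I_of_sum_eq_zero hsum hnorm,
      normSq_add_mul_I]
  have hcube : 54 * (a 0 * a 1 * a 2) ^ 2 ≤ 1 := by
    have h := sq_mul_mul_le_of_add_add_eq_zero (by rwa [Fin.sum_univ_three] at hsum)
    rwa [← Fin.sum_univ_three (fun i ↦ a i ^ 2), hnorm, one_pow] at h
  refine ⟨fun t ↦ ?_, fun t ↦ ⟨?_, ?_⟩⟩
  · have hS : Measurable fun ω ↦ ∑ i, a i * X i ω :=
      Finset.measurable_sum _ fun i _ ↦ (hmeas i).const_mul _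
    rw [← re_charFun_map hS t, hindep.charFun_map_fun_sum_mul hmeas]
    simp_rw [hdist, charFun_expMeasure one_pos, ofReal_one, one_div]
    rw [Finset.prod_inv_distrib, inv_re, prod_one_sub_mul_I_of_sum_eq_zero hsum hnorm,
      normSq_add_mul_I, ← hprod, add_re, ofReal_re, re_ofReal_mul, I_re, mul_zero, add_zero]
  · rw [hprod]
    exact le_add_of_nonneg_right (sq_nonneg _)
  · rw [hprod]
    nlinarith [mul_le_mul_of_nonneg_left hcube (by positivity : (0 : ℝ) ≤ t ^ 6)]
end

section
/- For integers n ≥ 2, k ≥ 1, let H_m(t) := h_m(t,...,t,1) be the CHS polynomial of degree m in n copies of t and one 1. Then H_m(t) = ∑_{j=0}^m C(n+j−1, j)·t^j. Moreover there is a unique t* ∈ (−1,0) with H_{2k−1}(t*) = 0, and at this root H_{2k}(t*) = C(n+2k−1, 2k)·(t*)^{2k}. -/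
/-!
Splitting off the powers of the last variable gives `h_m(t,…,t,1) = ∑_{j ≤ m} h_j(t,…,t)`, and
`h_j(t,…,t) = C(n+j-1, j) tʲ` counts multisets, so `H_m` is the truncation `P n (m+1)`
(`partialNegBinom`) of the binomial series of `(1 - t)⁻ⁿ`. Multiplying by `1 - t` lowers the exponent:
`(1 - t) P (N+1) M = P N M - C(N+M-1, M-1) tᴹ`. By induction on `N`, odd truncations are positive
on `(-1, 0]`, and even ones are negative at `-1` once `N ≥ 2`. As `(P n (M+1))' = n P (n+1) M`,
the even truncation `H_{2k-1}` increases strictly on `[-1, 0]` from a negative value to `1`, so it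
has exactly one root there; at that root `H_{2k} = H_{2k-1} + C(n+2k-1, 2k) t^{2k}` is the last
term.
-/

open Finset

/-- `H n m t = h_m(t,…,t,1)` with `n` copies of `t` and one `1`. -/
noncomputable def Hpoly (n m : ℕ) (t : ℝ) : ℝ :=
  chs (n + 1) m (Fin.snoc (fun _ : Fin n => t) 1)

/-- The first `M` terms of the binomial series of `(1 - t)⁻ⁿ`. -/
noncomputable def partialNegBinom (n M : ℕ) (t : ℝ) : ℝ :=
  ∑ j ∈ range M, ((n + j - 1).choose j : ℝ) * t ^ j

theorem partialNegBinom_succ (n M : ℕ) (t : ℝ) :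
    partialNegBinom n (M + 1) t =
      partialNegBinom n M t + ((n + M - 1).choose M : ℝ) * t ^ M :=
  sum_range_succ _ _

theorem Finset.sum_sym_insert_prod_map {α R : Type*} [CommSemiring R] [DecidableEq α]
    {a : α} {s : Finset α} (h : a ∉ s) (f : α → R) (m : ℕ) :
    ∑ x ∈ (insert a s).sym m, (x.1.map f).prod =
      ∑ i : Fin (m + 1), f a ^ (i : ℕ) * ∑ x ∈ s.sym (m - i), (x.1.map f).prod := by
  rw [← Finset.sum_coe_sort, ← (symInsertEquiv h).symm.sum_comp, Fintype.sum_sigma]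
  refine Fintype.sum_congr _ _ fun i => ?_
  rw [Finset.mul_sum, ← Finset.sum_coe_sort (s.sym (m - i))]
  refine Fintype.sum_congr _ _ fun x => ?_
  simp [Sym.fill, Sym.coe_replicate, mul_comm]

theorem chs_succ (n m : ℕ) (a : Fin (n + 1) → ℝ) :
    chs (n + 1) m a =
      ∑ i ∈ range (m + 1), a (Fin.last n) ^ i * chs n (m - i) (a ∘ Fin.castSucc) := by
  rw [← Fin.sum_univ_eq_sum_range (fun i => a (Fin.last n) ^ i * chs n (m - i) (a ∘ Fin.castSucc)),
    chs, Fin.univ_castSuccEmb, cons_eq_insert, sum_sym_insert_prod_map (by simp)]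
  refine Fintype.sum_congr _ _ fun i => ?_
  simp [sym_map, chs, Multiset.map_map]

theorem chs_const (n m : ℕ) (t : ℝ) :
    chs n m (fun _ => t) = ((n + m - 1).choose m : ℝ) * t ^ m := by
  have h : ∀ s ∈ (univ : Finset (Fin n)).sym m, (s.1.map fun _ => t).prod = t ^ m := fun s _ => by
    rw [Multiset.map_const', Multiset.prod_replicate, s.2]
  rw [chs, sum_congr rfl h, sum_const, nsmul_eq_mul, sym_univ, card_univ, Sym.card_sym_eq_choose,
    Fintype.card_fin]

theorem Hpoly_eq_partialNegBinom (n m : ℕ) : Hpoly n m = partialNegBinom n (m + 1) := by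
  funext t
  have h : (Fin.snoc (fun _ : Fin n => t) 1 : Fin (n + 1) → ℝ) ∘ Fin.castSucc = fun _ => t := by
    funext i; simp
  rw [Hpoly, chs_succ, partialNegBinom, ← sum_range_reflect]
  refine sum_congr rfl fun i hi => ?_
  rw [Fin.snoc_last, h, one_pow, one_mul, chs_const, add_tsub_cancel_right]
  rw [Nat.sub_sub_self (by simpa [Nat.lt_succ_iff] using hi)]

theorem one_sub_mul_partialNegBinom (N m : ℕ) (t : ℝ) :
    (1 - t) * partialNegBinom (N + 1) (m + 1) t =
      partialNegBinom N (m + 1) t - ((N + m).choose m : ℝ) * t ^ (m + 1) := by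
  induction m with
  | zero => simp [partialNegBinom]
  | succ m ih =>
    have pascal : ((N + (m + 1)).choose (m + 1) : ℝ) =
        (N + m).choose m + (N + (m + 1) - 1).choose (m + 1) := by
      rw [show N + (m + 1) - 1 = N + m by omega, show N + (m + 1) = N + m + 1 by omega,
        Nat.choose_succ_succ', Nat.cast_add]
    rw [partialNegBinom_succ, mul_add, ih, partialNegBinom_succ N (m + 1),
      show N + 1 + (m + 1) - 1 = N + (m + 1) by omega, pascal]
    ring

theorem partialNegBinom_pos {N : ℕ} (hN : 1 ≤ N) (l : ℕ) {t : ℝ} (ht₁ : -1 < t) (ht₂ : t ≤ 0) :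
    0 < partialNegBinom N (2 * l + 1) t := by
  induction N, hN using Nat.le_induction with
  | base =>
    have : partialNegBinom 1 (2 * l + 1) t = ∑ j ∈ range (2 * l + 1), t ^ j := by
      simp [partialNegBinom]
    rw [this]
    exact geom_sum_pos' (by linarith) (by omega)
  | succ N _ ih =>
    have h := one_sub_mul_partialNegBinom N (2 * l) t
    have : t ^ (2 * l + 1) ≤ 0 := Odd.pow_nonpos ⟨l, rfl⟩ ht₂
    have : (0 : ℝ) ≤ (N + 2 * l).choose (2 * l) := Nat.cast_nonneg _
    nlinarith

theorem partialNegBinom_neg_one_nonpos {N : ℕ} (hN : 1 ≤ N) (l : ℕ) :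
    partialNegBinom N (2 * l + 2) (-1) ≤ 0 := by
  induction N, hN using Nat.le_induction with
  | base =>
    have : Even (2 * l + 2) := ⟨l + 1, by ring⟩
    simp [partialNegBinom, neg_one_geom_sum, this]
  | succ N _ ih =>
    have h := one_sub_mul_partialNegBinom N (2 * l + 1) (-1)
    have : (0 : ℝ) ≤ (N + (2 * l + 1)).choose (2 * l + 1) := Nat.cast_nonneg _
    rw [show (-1 : ℝ) ^ (2 * l + 1 + 1) = 1 from Even.neg_one_pow ⟨l + 1, by ring⟩] at h
    linarith

theorem partialNegBinom_neg_one_neg {n : ℕ} (hn : 2 ≤ n) (l : ℕ) :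
    partialNegBinom n (2 * l + 2) (-1) < 0 := by
  obtain ⟨N, rfl⟩ : ∃ N, n = N + 1 := ⟨n - 1, by omega⟩
  have h := one_sub_mul_partialNegBinom N (2 * l + 1) (-1)
  have := partialNegBinom_neg_one_nonpos (by omega : 1 ≤ N) l
  have : (0 : ℝ) < (N + (2 * l + 1)).choose (2 * l + 1) :=
    Nat.cast_pos.2 (Nat.choose_pos (by omega))
  rw [show (-1 : ℝ) ^ (2 * l + 1 + 1) = 1 from Even.neg_one_pow ⟨l + 1, by ring⟩] at h
  linarith

theorem partialNegBinom_succ_apply_zero (n M : ℕ) : partialNegBinom n (M + 1) 0 = 1 := by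
  simp [partialNegBinom, sum_range_succ']

theorem continuous_partialNegBinom (n M : ℕ) : Continuous (partialNegBinom n M) := by
  unfold partialNegBinom
  fun_prop

theorem hasDerivAt_partialNegBinom (n M : ℕ) (t : ℝ) :
    HasDerivAt (partialNegBinom n (M + 1)) (n * partialNegBinom (n + 1) M t) t := by
  have hfun : partialNegBinom n (M + 1) =
      fun t => 1 + ∑ i ∈ range M, ((n + i).choose (i + 1) : ℝ) * t ^ (i + 1) := by
    funext t
    rw [partialNegBinom, sum_range_succ', add_comm]
    simp [show ∀ i, n + (i + 1) - 1 = n + i from fun i => by omega]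
  rw [hfun, partialNegBinom, mul_sum]
  refine ((HasDerivAt.fun_sum fun i _ =>
    ((hasDerivAt_pow (i + 1) t).const_mul ((n + i).choose (i + 1) : ℝ))).const_add 1).congr_deriv
    (sum_congr rfl fun i _ => ?_)
  have hcoef : ((n + i).choose (i + 1) : ℝ) * (i + 1) = (n + i).choose i * n := by
    have h := Nat.choose_succ_right_eq (n + i) i
    rw [Nat.add_sub_cancel] at h
    exact_mod_cast h
  rw [show n + 1 + i - 1 = n + i by omega, add_tsub_cancel_right]
  push_cast
  linear_combination t ^ i * hcoef

theorem strictMonoOn_partialNegBinom {n : ℕ} (hn : 1 ≤ n) (l : ℕ) :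
    StrictMonoOn (partialNegBinom n (2 * l + 2)) (Set.Icc (-1) 0) := by
  refine strictMonoOn_of_deriv_pos (convex_Icc _ _) (continuous_partialNegBinom _ _).continuousOn
    fun t ht => ?_
  rw [interior_Icc] at ht
  rw [(hasDerivAt_partialNegBinom n (2 * l + 1) t).deriv]
  exact mul_pos (by exact_mod_cast hn) (partialNegBinom_pos (by omega) l ht.1 ht.2.le)

theorem existsUnique_partialNegBinom_eq_zero {n : ℕ} (hn : 2 ≤ n) (l : ℕ) :
    ∃! t : ℝ, t ∈ Set.Ioo (-1) 0 ∧ partialNegBinom n (2 * l + 2) t = 0 := by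
  have hsign : (0 : ℝ) ∈ Set.Ioo (partialNegBinom n (2 * l + 2) (-1))
      (partialNegBinom n (2 * l + 2) 0) :=
    ⟨partialNegBinom_neg_one_neg hn l, by rw [partialNegBinom_succ_apply_zero]; exact one_pos⟩
  obtain ⟨t₀, ht₀, hroot⟩ := intermediate_value_Ioo (by norm_num : (-1 : ℝ) ≤ 0)
    (continuous_partialNegBinom _ _).continuousOn hsign
  refine ⟨t₀, ⟨ht₀, hroot⟩, fun t ⟨ht, hroot'⟩ => ?_⟩
  exact (strictMonoOn_partialNegBinom (by omega) l).injOn (Set.Ioo_subset_Icc_self ht)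
    (Set.Ioo_subset_Icc_self ht₀) (hroot'.trans hroot.symm)

theorem stmt18 (n k : ℕ) (hn : 2 ≤ n) (hk : 1 ≤ k) :
    (∀ (m : ℕ) (t : ℝ),
        Hpoly n m t = ∑ j ∈ Finset.range (m + 1), ((n + j - 1).choose j : ℝ) * t ^ j) ∧
    (∃! t : ℝ, t ∈ Set.Ioo (-1 : ℝ) 0 ∧ Hpoly n (2 * k - 1) t = 0) ∧
    (∀ t ∈ Set.Ioo (-1 : ℝ) 0, Hpoly n (2 * k - 1) t = 0 →
        Hpoly n (2 * k) t = ((n + 2 * k - 1).choose (2 * k) : ℝ) * t ^ (2 * k)) := by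
  have hH := Hpoly_eq_partialNegBinom n
  obtain ⟨l, rfl⟩ : ∃ l, k = l + 1 := ⟨k - 1, by omega⟩
  have hodd : Hpoly n (2 * (l + 1) - 1) = partialNegBinom n (2 * l + 2) := by
    rw [hH, show 2 * (l + 1) - 1 + 1 = 2 * l + 2 by omega]
  refine ⟨fun m => congrFun (hH m), hodd ▸ existsUnique_partialNegBinom_eq_zero hn l,
    fun t _ hroot => ?_⟩
  rw [hH, partialNegBinom_succ, show 2 * (l + 1) = 2 * l + 2 by ring, ← hodd, hroot, zero_add]
end
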